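/- arXiv:2402.00713 — 2 statements merged into one kernel-verified Lean document; each statement's English description precedes it below -/
import Mathlib

section
/- Let (X_n) be independent random variables on (Ω, F) and 𝒫 a family of probability measures under each of which the X_n are independent. Suppose for some c > 0, with X_n^{≤c} := X_n·1{|X_n| ≤ c}: (1) lim_{m→∞} sup_{P∈𝒫} Σ_{n=m}^∞ |E_P X_n^{≤c}| = 0; (2) lim_{m→∞} sup_{P∈𝒫} Σ_{n=m}^∞ Var_P X_n^{≤c} = 0; (3) lim_{m→∞} sup_{P∈𝒫} Σ_{n=m}^∞ P(|X_n| > c) = 0. Then S_n = Σ_{i=1}^n X_i is a 𝒫-uniform Cauchy sequence: for every ε > 0, lim_{m→∞} sup_{P∈𝒫} P(sup_{k,n≥m} |S_k − S_n| ≥ ε) = 0. -/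
/-!
Off the event that some `X i` with `i > m` exceeds `c` in absolute value, whose probability is at
most the tail of the third series, the increments of the partial sums after `m` are those of the
truncated variables. Centring them moves every partial sum by at most the tail of the first series,
and Kolmogorov's maximal inequality bounds the probability that a centred partial sum reaches
`ε / 4` by the tail of the second series divided by `(ε / 4) ^ 2`. The three tails are small
uniformly in `P ∈ Ps`, hence so is the probability that the partial sums oscillate by `ε` after `m`.

Kolmogorov's inequality is proved by splitting the maximal event according to the first time `n`
the partial sum reaches `lam`; on each piece `A`, `E[Z_N²; A] ≥ E[Z_n²; A] ≥ lam² P(A)`.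
-/

open MeasureTheory ProbabilityTheory Finset

noncomputable def truncate (c x : ℝ) : ℝ := if |x| ≤ c then x else 0

lemma measurable_truncate (c : ℝ) : Measurable (truncate c) :=
  Measurable.ite (measurableSet_le measurable_abs measurable_const) measurable_id measurable_const

lemma abs_truncate_le {c : ℝ} (hc : 0 ≤ c) (x : ℝ) : |truncate c x| ≤ c := by
  unfold truncate
  split_ifs with h
  exacts [h, by simpa using hc]

lemma truncate_of_abs_le {c x : ℝ} (h : |x| ≤ c) : truncate c x = x := if_pos h

lemma sum_Icc_one_eq_add_sum_range {M : Type*} [AddCommMonoid M] (x : ℕ → M) {m k : ℕ}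
    (hmk : m ≤ k) :
    ∑ i ∈ Icc 1 k, x i = ∑ i ∈ Icc 1 m, x i + ∑ i ∈ range (k - m), x (m + 1 + i) := by
  obtain ⟨t, rfl⟩ := Nat.exists_eq_add_of_le hmk
  rw [Nat.add_sub_cancel_left]
  induction t with
  | zero => simp
  | succ t ih =>
    rw [← add_assoc, sum_Icc_succ_top (by omega), ih (by omega), sum_range_succ, add_assoc,
      add_right_comm m 1 t]

lemma abs_sum_Icc_sub_sum_Icc_lt {x : ℕ → ℝ} {m : ℕ} {η : ℝ}
    (h : ∀ t, |∑ i ∈ range t, x (m + 1 + i)| < η) {k n : ℕ} (hk : m ≤ k) (hn : m ≤ n) :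
    |∑ i ∈ Icc 1 k, x i - ∑ i ∈ Icc 1 n, x i| < 2 * η := by
  rw [sum_Icc_one_eq_add_sum_range x hk, sum_Icc_one_eq_add_sum_range x hn,
    add_sub_add_left_eq_sub]
  linarith [abs_sub (∑ i ∈ range (k - m), x (m + 1 + i)) (∑ i ∈ range (n - m), x (m + 1 + i)),
    h (k - m), h (n - m)]

lemma cauchy_event_subset {Ω : Type*} {X : ℕ → Ω → ℝ} {c ε : ℝ} {m : ℕ} {μ : ℕ → ℝ}
    (hμ : ∀ t, ∑ i ∈ range t, |μ i| < ε / 4) :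
    {ω | ∃ k ≥ m, ∃ n ≥ m, ε ≤ |∑ i ∈ Icc 1 k, X i ω - ∑ i ∈ Icc 1 n, X i ω|} ⊆
      (⋃ k, {ω | c < |X (m + 1 + k) ω|}) ∪
        {ω | ∃ t, ε / 4 ≤ |∑ i ∈ range t, (truncate c (X (m + 1 + i) ω) - μ i)|} := by
  rintro ω ⟨k, hk, n, hn, hkn⟩
  by_contra hω
  simp only [Set.mem_union, Set.mem_iUnion, Set.mem_ofPred_eq, not_or, not_exists, not_lt,
    not_le] at hω
  obtain ⟨hsmall, hcentred⟩ := hω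
  have hpartial : ∀ t, |∑ i ∈ range t, X (m + 1 + i) ω| < ε / 2 := fun t => by
    have hsplit : ∑ i ∈ range t, X (m + 1 + i) ω = ∑ i ∈ range t,
        (truncate c (X (m + 1 + i) ω) - μ i) + ∑ i ∈ range t, μ i := by
      rw [← sum_add_distrib]
      exact sum_congr rfl fun i _ => by rw [truncate_of_abs_le (hsmall i), sub_add_cancel]
    rw [hsplit]
    linarith [abs_add_le (∑ i ∈ range t, (truncate c (X (m + 1 + i) ω) - μ i))
      (∑ i ∈ range t, μ i), abs_sum_le_sum_abs μ (range t), hcentred t, hμ t]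
  linarith [abs_sum_Icc_sub_sum_Icc_lt (x := fun i => X i ω) hpartial hk hn]

lemma sum_lt_of_tsum_ofReal_lt {ι : Type*} {f : ι → ℝ} (hf : ∀ i, 0 ≤ f i) {r : ℝ}
    (h : ∑' i, ENNReal.ofReal (f i) < ENNReal.ofReal r) (s : Finset ι) : ∑ i ∈ s, f i < r := by
  have hs := (ENNReal.sum_le_tsum s).trans_lt h
  rw [← ENNReal.ofReal_sum_of_nonneg fun i _ => hf i, ENNReal.ofReal_lt_ofReal_iff'] at hs
  exact hs.1

lemma measurable_sum_iSup_comap {Ω ι : Type*} {Y : ι → Ω → ℝ} {s : Finset ι} {S : Set ι}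
    (hsS : ↑s ⊆ S) :
    Measurable[⨆ i ∈ S, MeasurableSpace.comap (Y i) inferInstance] (fun ω => ∑ i ∈ s, Y i ω) :=
  Finset.measurable_sum _ fun i hi => by
    have hle : MeasurableSpace.comap (Y i) inferInstance ≤
        ⨆ j ∈ S, MeasurableSpace.comap (Y j) inferInstance :=
      le_iSup₂ (f := fun j (_ : j ∈ S) => MeasurableSpace.comap (Y j) inferInstance) i (hsS hi)
    exact (comap_measurable (Y i)).mono hle le_rfl

section Kolmogorov

variable {Ω : Type*} [MeasurableSpace Ω] {P : Measure Ω}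

lemma ProbabilityTheory.iIndepFun.indepFun_of_measurable_iSup {ι β γ γ' : Type*}
    [mβ : MeasurableSpace β] [MeasurableSpace γ] [MeasurableSpace γ'] {Y : ι → Ω → β}
    (hY : ∀ i, Measurable (Y i))
    (hind : iIndepFun Y P) {S T : Set ι} (hST : Disjoint S T) {f : Ω → γ} {g : Ω → γ'}
    (hf : Measurable[⨆ i ∈ S, mβ.comap (Y i)] f) (hg : Measurable[⨆ j ∈ T, mβ.comap (Y j)] g) :
    IndepFun f g P :=
  (IndepFun_iff_Indep f g P).2 <| indep_of_indep_of_le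
    (indep_iSup_of_disjoint (fun i => (hY i).comap_le) hind hST) hf.comap_le hg.comap_le

lemma memLp_truncate_comp [IsFiniteMeasure P] {c : ℝ} (hc : 0 ≤ c) {f : Ω → ℝ}
    (hf : Measurable f) : MemLp (fun ω => truncate c (f ω)) 2 P :=
  .of_bound ((measurable_truncate c).comp hf).aestronglyMeasurable c
    (ae_of_all _ fun ω => abs_truncate_le hc (f ω))

variable {Y : ℕ → Ω → ℝ}

/-- Orthogonality of increments: for `A` in the past of time `n`, the future increment
`∑ i ∈ Ico n N, Y i` is independent of `𝟙_A ∑ i ∈ range n, Y i` and centred. -/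
lemma setIntegral_sq_sum_range_le_of_integral_eq_zero [IsFiniteMeasure P]
    (hY : ∀ i, Measurable (Y i)) (hind : iIndepFun Y P) (hL2 : ∀ i, MemLp (Y i) 2 P)
    (hmean : ∀ i, P[Y i] = 0) {n N : ℕ} (hnN : n ≤ N) {A : Set Ω}
    (hA : MeasurableSet[⨆ i ∈ (range n : Set ℕ), MeasurableSpace.comap (Y i) inferInstance] A) :
    ∫ ω in A, (∑ i ∈ range n, Y i ω) ^ 2 ∂P ≤ ∫ ω in A, (∑ i ∈ range N, Y i ω) ^ 2 ∂P := by
  set Z : Ω → ℝ := fun ω => ∑ i ∈ range n, Y i ω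
  set D : Ω → ℝ := fun ω => ∑ i ∈ Ico n N, Y i ω
  have hsplit : ∀ ω, ∑ i ∈ range N, Y i ω = Z ω + D ω := fun ω =>
    (sum_range_add_sum_Ico (fun i => Y i ω) hnN).symm
  have hZ : MemLp Z 2 P := memLp_finsetSum _ fun i _ => hL2 i
  have hD : MemLp D 2 P := memLp_finsetSum _ fun i _ => hL2 i
  have hAm : MeasurableSet A := (iSup₂_le fun i _ => (hY i).comap_le) _ hA
  have hZA : MemLp (A.indicator Z) 2 P := hZ.indicator hAm
  have hindep : IndepFun (A.indicator Z) D P :=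
    hind.indepFun_of_measurable_iSup hY
      (by rw [range_eq_Ico]; exact disjoint_coe.2 (Ico_disjoint_Ico_consecutive 0 n N))
      ((measurable_sum_iSup_comap subset_rfl).indicator hA)
      (measurable_sum_iSup_comap subset_rfl)
  have hcross : ∫ ω in A, Z ω * D ω ∂P = 0 := by
    rw [← integral_indicator hAm]
    simp_rw [Set.indicator_mul_left]
    rw [hindep.integral_fun_mul_eq_mul_integral hZA.aestronglyMeasurable hD.aestronglyMeasurable,
      integral_finsetSum _ fun i _ => (hL2 i).integrable one_le_two]
    simp [hmean]
  have hprod : Integrable (fun ω => Z ω * D ω) P := hZ.integrable_mul hD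
  calc ∫ ω in A, Z ω ^ 2 ∂P = ∫ ω in A, (Z ω ^ 2 + 2 * (Z ω * D ω)) ∂P := by
        rw [integral_add hZ.integrable_sq.integrableOn (hprod.const_mul 2).integrableOn,
          integral_const_mul, hcross, mul_zero, add_zero]
    _ ≤ ∫ ω in A, (∑ i ∈ range N, Y i ω) ^ 2 ∂P := by
        refine setIntegral_mono ((hZ.integrable_sq.add (hprod.const_mul 2)).integrableOn)
          (memLp_finsetSum _ fun i _ => hL2 i).integrable_sq.integrableOn fun ω => ?_
        rw [hsplit]
        nlinarith [sq_nonneg (D ω)]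

theorem kolmogorov_maximal_ineq_of_integral_eq_zero [IsFiniteMeasure P]
    (hY : ∀ i, Measurable (Y i)) (hind : iIndepFun Y P) (hL2 : ∀ i, MemLp (Y i) 2 P)
    (hmean : ∀ i, P[Y i] = 0) (N : ℕ) {lam : ℝ} (hlam : 0 < lam) :
    lam ^ 2 * P.real {ω | ∃ n ≤ N, lam ≤ |∑ i ∈ range n, Y i ω|} ≤
      ∑ i ∈ range N, variance (Y i) P := by
  set Z : ℕ → Ω → ℝ := fun n ω => ∑ i ∈ range n, Y i ω
  set E : ℕ → Set Ω := fun n => {ω | lam ≤ |Z n ω|}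
  set F : ℕ → MeasurableSpace Ω :=
    fun n => ⨆ i ∈ (range n : Set ℕ), MeasurableSpace.comap (Y i) inferInstance
  have hZ : ∀ n, MemLp (Z n) 2 P := fun n => memLp_finsetSum _ fun i _ => hL2 i
  have hEF : ∀ {j n}, j ≤ n → MeasurableSet[F n] (E j) := fun hjn =>
    measurable_sum_iSup_comap (by simpa using range_subset_range.2 hjn)
      (measurableSet_le measurable_const measurable_abs)
  -- `disjointed E n` is the event that `|Z|` first reaches `lam` at time `n`
  have hDF : ∀ n, MeasurableSet[F n] (disjointed E n) := fun n => by
    rw [disjointed_eq_inter_compl]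
    exact (hEF le_rfl).inter
      (.iInter fun j => .iInter fun hj => (hEF hj.le).compl)
  have hD : ∀ n, MeasurableSet (disjointed E n) :=
    fun n => (iSup₂_le fun i _ => (hY i).comap_le : F n ≤ _) _ (hDF n)
  have hunion : {ω | ∃ n ≤ N, lam ≤ |Z n ω|} = ⋃ n ∈ range (N + 1), disjointed E n := by
    rw [biUnion_range_succ_disjointed, partialSups_eq_biSup]
    ext ω
    simp [E]
  have hdisj : (range (N + 1) : Set ℕ).PairwiseDisjoint (disjointed E) :=
    (disjoint_disjointed E).set_pairwise _
  have hentrance : ∀ n ≤ N, lam ^ 2 * P.real (disjointed E n) ≤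
      ∫ ω in disjointed E n, Z N ω ^ 2 ∂P := fun n hnN =>
    calc lam ^ 2 * P.real (disjointed E n) = ∫ _ in disjointed E n, lam ^ 2 ∂P := by
          rw [setIntegral_const, smul_eq_mul, mul_comm]
      _ ≤ ∫ ω in disjointed E n, Z n ω ^ 2 ∂P :=
          setIntegral_mono_on (integrableOn_const (measure_ne_top _ _))
            (hZ n).integrable_sq.integrableOn (hD n) fun ω hω => by
              rw [← sq_abs (Z n ω)]
              exact pow_le_pow_left₀ hlam.le (disjointed_le E n hω) 2
      _ ≤ ∫ ω in disjointed E n, Z N ω ^ 2 ∂P :=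
          setIntegral_sq_sum_range_le_of_integral_eq_zero hY hind hL2 hmean hnN (hDF n)
  have hvar : variance (Z N) P = ∑ i ∈ range N, variance (Y i) P := by
    have hZN : Z N = ∑ i ∈ range N, Y i := by ext ω; simp [Z]
    rw [hZN]
    exact IndepFun.variance_sum (fun i _ => hL2 i) fun i _ j _ hij => hind.indepFun hij
  calc lam ^ 2 * P.real {ω | ∃ n ≤ N, lam ≤ |Z n ω|}
      = ∑ n ∈ range (N + 1), lam ^ 2 * P.real (disjointed E n) := by
        rw [hunion, measureReal_biUnion_finset hdisj fun n _ => hD n, mul_sum]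
    _ ≤ ∑ n ∈ range (N + 1), ∫ ω in disjointed E n, Z N ω ^ 2 ∂P :=
        sum_le_sum fun n hn => hentrance n (Nat.lt_succ_iff.1 (mem_range.1 hn))
    _ = ∫ ω in ⋃ n ∈ range (N + 1), disjointed E n, Z N ω ^ 2 ∂P :=
        (integral_biUnion_finset _ (fun n _ => hD n) hdisj
          fun n _ => (hZ N).integrable_sq.integrableOn).symm
    _ ≤ ∫ ω, Z N ω ^ 2 ∂P :=
        setIntegral_le_integral (hZ N).integrable_sq (ae_of_all _ fun ω => sq_nonneg _)
    _ = ∑ i ∈ range N, variance (Y i) P := by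
        rw [← hvar, variance_of_integral_eq_zero (hZ N).aemeasurable]
        rw [integral_finsetSum _ fun i _ => (hL2 i).integrable one_le_two]
        simp [hmean]

theorem kolmogorov_maximal_ineq [IsProbabilityMeasure P]
    (hY : ∀ i, Measurable (Y i)) (hind : iIndepFun Y P) (hL2 : ∀ i, MemLp (Y i) 2 P)
    {lam : ℝ} (hlam : 0 < lam) :
    ENNReal.ofReal (lam ^ 2) * P {ω | ∃ n, lam ≤ |∑ i ∈ range n, (Y i ω - P[Y i])|} ≤
      ∑' i, ENNReal.ofReal (variance (Y i) P) := by
  set W : ℕ → Ω → ℝ := fun i ω => Y i ω - P[Y i]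
  have hWind : iIndepFun W P :=
    hind.comp (fun i x => x - ∫ ω, Y i ω ∂P) fun _ => measurable_id.sub_const _
  have hWmean : ∀ i, P[W i] = 0 := fun i => by
    simp [W, integral_sub ((hL2 i).integrable one_le_two) (integrable_const _)]
  have hWvar : ∀ i, variance (W i) P = variance (Y i) P :=
    fun i => variance_sub_const (hY i).aestronglyMeasurable _
  set B : ℕ → Set Ω := fun N => {ω | ∃ n ≤ N, lam ≤ |∑ i ∈ range n, W i ω|}
  have hB : Monotone B := fun N N' h ω ⟨n, hn, hω⟩ => ⟨n, hn.trans h, hω⟩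
  have hU : {ω | ∃ n, lam ≤ |∑ i ∈ range n, W i ω|} = ⋃ N, B N := by
    ext ω
    simp only [Set.mem_ofPred_eq, Set.mem_iUnion, B]
    exact ⟨fun ⟨n, h⟩ => ⟨n, n, le_rfl, h⟩, fun ⟨_, n, _, h⟩ => ⟨n, h⟩⟩
  rw [hU, hB.measure_iUnion, ENNReal.mul_iSup]
  refine iSup_le fun N => ?_
  calc ENNReal.ofReal (lam ^ 2) * P (B N) = ENNReal.ofReal (lam ^ 2 * P.real (B N)) := by
        rw [ENNReal.ofReal_mul (by positivity), ofReal_measureReal]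
    _ ≤ ENNReal.ofReal (∑ i ∈ range N, variance (Y i) P) := by
        refine ENNReal.ofReal_le_ofReal ?_
        rw [← sum_congr rfl fun i _ => hWvar i]
        exact kolmogorov_maximal_ineq_of_integral_eq_zero (fun i => (hY i).sub_const _) hWind
          (fun i => (hL2 i).sub (memLp_const _)) hWmean N hlam
    _ = ∑ i ∈ range N, ENNReal.ofReal (variance (Y i) P) :=
        ENNReal.ofReal_sum_of_nonneg fun i _ => variance_nonneg _ _
    _ ≤ ∑' i, ENNReal.ofReal (variance (Y i) P) := ENNReal.sum_le_tsum _

end Kolmogorov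

/-- Distribution-uniform Kolmogorov three-series theorem: if the tails of the three series
(of truncated means, truncated variances, and exceedance probabilities) vanish Ps-uniformly
for some truncation level `c > 0`, then the partial sums are Ps-uniformly Cauchy. -/
theorem stmt2 {Ω : Type*} [MeasurableSpace Ω] (Ps : Set (Measure Ω))
    (hPs : ∀ P ∈ Ps, IsProbabilityMeasure P)
    (X : ℕ → Ω → ℝ) (hmeas : ∀ n, Measurable (X n))
    (hindep : ∀ P ∈ Ps, iIndepFun X P)
    (c : ℝ) (hc : 0 < c)
    (hseries1 : ∀ ε : ℝ, 0 < ε → ∃ M : ℕ, ∀ m ≥ M, ∀ P ∈ Ps,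
      ∑' k : ℕ, ENNReal.ofReal
        |∫ ω, (if |X (m + k) ω| ≤ c then X (m + k) ω else 0) ∂P| < ENNReal.ofReal ε)
    (hseries2 : ∀ ε : ℝ, 0 < ε → ∃ M : ℕ, ∀ m ≥ M, ∀ P ∈ Ps,
      ∑' k : ℕ, ENNReal.ofReal
        (variance (fun ω => if |X (m + k) ω| ≤ c then X (m + k) ω else 0) P) <
        ENNReal.ofReal ε)
    (hseries3 : ∀ ε : ℝ, 0 < ε → ∃ M : ℕ, ∀ m ≥ M, ∀ P ∈ Ps,
      ∑' k : ℕ, P {ω | c < |X (m + k) ω|} < ENNReal.ofReal ε) :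
    ∀ ε : ℝ, 0 < ε → ∀ δ : ℝ, 0 < δ → ∃ M : ℕ, ∀ m ≥ M, ∀ P ∈ Ps,
      P {ω | ∃ k ≥ m, ∃ n ≥ m, ε ≤
        |(∑ i ∈ Finset.Icc 1 k, X i ω) - (∑ i ∈ Finset.Icc 1 n, X i ω)|} <
        ENNReal.ofReal δ := by
  intro ε hε δ hδ
  obtain ⟨M₁, hM₁⟩ := hseries1 (ε / 4) (by positivity)
  obtain ⟨M₂, hM₂⟩ := hseries2 ((ε / 4) ^ 2 * (δ / 2)) (by positivity)
  obtain ⟨M₃, hM₃⟩ := hseries3 (δ / 2) (by positivity)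
  refine ⟨max M₁ (max M₂ M₃), fun m hm P hP => ?_⟩
  have := hPs P hP
  set Y : ℕ → Ω → ℝ := fun i ω => truncate c (X (m + 1 + i) ω)
  have hmean : ∀ t, ∑ i ∈ range t, |P[Y i]| < ε / 4 := fun t =>
    sum_lt_of_tsum_ofReal_lt (fun _ => abs_nonneg _) (hM₁ (m + 1) (by omega) P hP) (range t)
  have hexceed : P (⋃ k, {ω | c < |X (m + 1 + k) ω|}) < ENNReal.ofReal (δ / 2) :=
    (measure_iUnion_le _).trans_lt (hM₃ (m + 1) (by omega) P hP)
  have hmaximal : P {ω | ∃ t, ε / 4 ≤ |∑ i ∈ range t, (Y i ω - P[Y i])|} <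
      ENNReal.ofReal (δ / 2) := by
    have hY : iIndepFun Y P := (((hindep P hP).comp _ fun _ => measurable_truncate c).precomp
      (add_right_injective (m + 1)) :)
    have hkol := kolmogorov_maximal_ineq (Y := Y)
      (fun i => (measurable_truncate c).comp (hmeas _)) hY
      (fun i => memLp_truncate_comp hc.le (hmeas _)) (show 0 < ε / 4 by positivity)
    rw [← ENNReal.mul_lt_mul_iff_right (a := ENNReal.ofReal ((ε / 4) ^ 2))
      (ENNReal.ofReal_pos.2 (by positivity)).ne' ENNReal.ofReal_ne_top,
      ← ENNReal.ofReal_mul (by positivity)]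
    exact hkol.trans_lt (hM₂ (m + 1) (by omega) P hP)
  calc _ ≤ P ((⋃ k, {ω | c < |X (m + 1 + k) ω|}) ∪
          {ω | ∃ t, ε / 4 ≤ |∑ i ∈ range t, (Y i ω - P[Y i])|}) :=
        measure_mono (cauchy_event_subset hmean)
    _ < ENNReal.ofReal (δ / 2) + ENNReal.ofReal (δ / 2) :=
        (measure_union_le _ _).trans_lt (ENNReal.add_lt_add hexceed hmaximal)
    _ = ENNReal.ofReal δ := by rw [← ENNReal.ofReal_add (by positivity) (by positivity), add_halves]
end

section
/- Let (X_n) be i.i.d. under each P in a family 𝒫 and let 0 < q < 1. Suppose lim_{m→∞} sup_{P∈𝒫} E_P(|X|^q · 1{|X|^q > m}) = 0. Then for every ε > 0, lim_{m→∞} sup_{P∈𝒫} P( sup_{k ≥ m} |k^{−1/q} Σ_{i=1}^k X_i| ≥ ε ) = 0. -/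
/-!
Split each `X i` at the level `|X i| ^ q = L`. The bounded parts contribute at most
`k L^{1/q} = o(k^{1/q})` to `S_k`, so by subadditivity of `t ↦ t ^ q` a deviation
`|S_k| ≥ ε k^{1/q}` forces the truncated moments `V i = |X i| ^ q 1{|X i| ^ q > L}` to satisfy
`∑_{i ≤ k} V i > (ε/2)^q k`. By the maximal ergodic inequality for the i.i.d. sequence `V`, this
happens for some `k` with probability at most `E[V] / (ε/2)^q`, which uniform integrability makes
small uniformly in `P`.
-/

open MeasureTheory ProbabilityTheory Filter Finset

lemma abs_add_rpow_le {q : ℝ} (hq0 : 0 ≤ q) (hq1 : q ≤ 1) (x y : ℝ) :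
    |x + y| ^ q ≤ |x| ^ q + |y| ^ q :=
  (Real.rpow_le_rpow (abs_nonneg _) (abs_add_le x y) hq0).trans
    (Real.rpow_add_le_add_rpow (abs_nonneg x) (abs_nonneg y) hq0 hq1)

lemma abs_sum_rpow_le {ι : Type*} {q : ℝ} (hq0 : 0 < q) (hq1 : q ≤ 1) (s : Finset ι)
    (x : ι → ℝ) : |∑ i ∈ s, x i| ^ q ≤ ∑ i ∈ s, |x i| ^ q :=
  le_sum_of_subadditive (fun y => |y| ^ q) (by simp [Real.zero_rpow hq0.ne'])
    (abs_add_rpow_le hq0.le hq1) s x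

noncomputable def rpowTail (q L x : ℝ) : ℝ :=
  {y : ℝ | L < |y| ^ q}.indicator (fun y => |y| ^ q) x

lemma rpowTail_nonneg (q L x : ℝ) : 0 ≤ rpowTail q L x :=
  Set.indicator_nonneg (fun y _ => Real.rpow_nonneg (abs_nonneg y) q) x

lemma rpowTail_le (q L x : ℝ) : rpowTail q L x ≤ |x| ^ q :=
  Set.indicator_le_self' (fun y _ => Real.rpow_nonneg (abs_nonneg y) q) x

lemma measurable_rpowTail (q L : ℝ) : Measurable (rpowTail q L) := by
  have h : Measurable fun y : ℝ => |y| ^ q := by fun_prop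
  exact h.indicator (measurableSet_lt measurable_const h)

lemma abs_sum_le_rpowTail {ι : Type*} {q L : ℝ} (hq0 : 0 < q) (hq1 : q ≤ 1) (hL : 0 ≤ L)
    (s : Finset ι) (x : ι → ℝ) :
    |∑ i ∈ s, x i| ≤ (∑ i ∈ s, rpowTail q L (x i)) ^ q⁻¹ + #s * L ^ q⁻¹ := by
  set z : ι → ℝ := fun i => if L < |x i| ^ q then x i else 0
  have hz : ∀ i, |z i| ^ q = rpowTail q L (x i) := by
    intro i
    by_cases h : L < |x i| ^ q <;> simp [z, rpowTail, h, Real.zero_rpow hq0.ne']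
  have hxz : ∀ i, |x i - z i| ≤ L ^ q⁻¹ := by
    intro i
    by_cases h : L < |x i| ^ q
    · simp [z, h]; positivity
    · simpa [z, h] using (Real.le_rpow_inv_iff_of_pos (abs_nonneg _) hL hq0).2 (not_lt.1 h)
  calc |∑ i ∈ s, x i| = |∑ i ∈ s, z i + ∑ i ∈ s, (x i - z i)| := by
        rw [← sum_add_distrib]; simp
    _ ≤ |∑ i ∈ s, z i| + ∑ i ∈ s, |x i - z i| :=
        (abs_add_le _ _).trans (add_le_add_right (abs_sum_le_sum_abs _ _) _)
    _ ≤ (∑ i ∈ s, rpowTail q L (x i)) ^ q⁻¹ + #s * L ^ q⁻¹ := by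
        gcongr
        · refine (Real.le_rpow_inv_iff_of_pos (abs_nonneg _)
            (sum_nonneg fun i _ => rpowTail_nonneg q L (x i)) hq0).2 ?_
          simpa only [hz] using abs_sum_rpow_le hq0 hq1 s z
        · simpa using sum_le_card_nsmul s _ _ fun i _ => hxz i

lemma mul_lt_sum_rpowTail_of_le_abs_sum {q L ε : ℝ} (hq0 : 0 < q) (hq1 : q ≤ 1) (hL : 0 ≤ L)
    {k : ℕ} (hk : 0 < k) (x : ℕ → ℝ) (hkL : k * L ^ q⁻¹ < ε / 2 * (k : ℝ) ^ q⁻¹)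
    (hS : ε ≤ |((k : ℝ) ^ q⁻¹)⁻¹ * ∑ i ∈ range k, x i|) :
    (ε / 2) ^ q * k < ∑ i ∈ range k, rpowTail q L (x i) := by
  have hk0 : (0 : ℝ) < k := by exact_mod_cast hk
  have hkq : 0 < (k : ℝ) ^ q⁻¹ := by positivity
  have hε : 0 < ε / 2 :=
    pos_of_mul_pos_left ((by positivity : (0 : ℝ) ≤ k * L ^ q⁻¹).trans_lt hkL) hkq.le
  have hS' : ε * (k : ℝ) ^ q⁻¹ ≤ |∑ i ∈ range k, x i| := by
    rwa [abs_mul, abs_inv, abs_of_pos hkq, le_inv_mul_iff₀ hkq, mul_comm] at hS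
  have hsplit := abs_sum_le_rpowTail hq0 hq1 hL (range k) x
  rw [card_range] at hsplit
  have hlt : ε / 2 * (k : ℝ) ^ q⁻¹ < (∑ i ∈ range k, rpowTail q L (x i)) ^ q⁻¹ := by linarith
  rw [Real.lt_rpow_inv_iff_of_pos (by positivity)
    (sum_nonneg fun i _ => rpowTail_nonneg q L (x i)) hq0, Real.mul_rpow hε.le hkq.le,
    Real.rpow_inv_rpow hk0.le hq0.ne'] at hlt
  exact hlt

lemma eventually_mul_lt_mul_rpow {p : ℝ} (hp : 1 < p) (C : ℝ) {η : ℝ} (hη : 0 < η) :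
    ∀ᶠ k : ℕ in atTop, k * C < η * (k : ℝ) ^ p := by
  have hgrow : Tendsto (fun k : ℕ => (k : ℝ) ^ (p - 1)) atTop atTop :=
    (tendsto_rpow_atTop (sub_pos.2 hp)).comp tendsto_natCast_atTop_atTop
  filter_upwards [hgrow.eventually_gt_atTop (C / η), eventually_gt_atTop 0] with k hk hk0
  have hk0' : (0 : ℝ) < k := by exact_mod_cast hk0
  have hpow : (k : ℝ) ^ p = k * (k : ℝ) ^ (p - 1) := by
    rw [Real.rpow_sub_one hk0'.ne', mul_div_cancel₀ _ hk0'.ne']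
  rw [div_lt_iff₀ hη] at hk
  rw [hpow]
  nlinarith

noncomputable def partialSumMax (f : ℕ → ℝ) (n : ℕ) : ℝ :=
  (range (n + 1)).sup' nonempty_range_add_one fun k => ∑ i ∈ range k, f i

section partialSumMax

variable (f : ℕ → ℝ)

lemma sum_range_le_partialSumMax {k n : ℕ} (hk : k ≤ n) :
    ∑ i ∈ range k, f i ≤ partialSumMax f n :=
  le_sup' (fun k => ∑ i ∈ range k, f i) (mem_range.2 (Nat.lt_succ_of_le hk))

lemma partialSumMax_nonneg (n : ℕ) : 0 ≤ partialSumMax f n := by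
  simpa using sum_range_le_partialSumMax f (Nat.zero_le n)

lemma partialSumMax_mono : Monotone (partialSumMax f) := fun _ _ hmn =>
  sup'_le _ _ fun _ hk =>
    sum_range_le_partialSumMax f ((Nat.lt_succ_iff.1 (mem_range.1 hk)).trans hmn)

lemma partialSumMax_le_max_zero_add_partialSumMax_succ (n : ℕ) :
    partialSumMax f n ≤ max 0 (f 0 + partialSumMax (fun i => f (i + 1)) n) := by
  refine sup'_le _ _ fun k hk => ?_
  rcases k with _ | j
  · simp
  · rw [sum_range_succ', add_comm]
    refine le_max_of_le_right (add_le_add_right (sum_range_le_partialSumMax _ ?_) _)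
    have := mem_range.1 hk
    omega

lemma measurable_partialSumMax (n : ℕ) : Measurable fun v : ℕ → ℝ => partialSumMax v n := by
  have : (fun v : ℕ → ℝ => partialSumMax v n) =
      (range (n + 1)).sup' nonempty_range_add_one fun k v => ∑ i ∈ range k, v i := by
    ext v; simp only [partialSumMax, Finset.sup'_apply]
  rw [this]
  exact Finset.measurable_range_sup' fun k _ => by fun_prop

lemma integrable_partialSumMax {Ω : Type*} [MeasurableSpace Ω] {μ : Measure Ω}
    {g : ℕ → Ω → ℝ} (hg : ∀ i, Integrable (g i) μ) (n : ℕ) :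
    Integrable (fun ω => partialSumMax (g · ω) n) μ := by
  have : (fun ω => partialSumMax (g · ω) n) =
      (range (n + 1)).sup' nonempty_range_add_one fun k ω => ∑ i ∈ range k, g i ω := by
    ext ω; simp only [partialSumMax, Finset.sup'_apply]
  rw [this]
  exact sup'_induction _ _ (p := (Integrable · μ)) (fun _ h₁ _ h₂ => Integrable.sup h₁ h₂)
    fun k _ => integrable_finsetSum _ fun i _ => hg i

end partialSumMax

lemma identDistrib_shift {Ω E : Type*} [MeasurableSpace Ω] [MeasurableSpace E]
    {P : Measure Ω} [IsProbabilityMeasure P] {V : ℕ → Ω → E} (hV : ∀ i, Measurable (V i))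
    (hind : iIndepFun V P) (hident : ∀ i, IdentDistrib (V i) (V 0) P P) :
    IdentDistrib (fun ω i => V (i + 1) ω) (fun ω i => V i ω) P P where
  aemeasurable_fst := (measurable_pi_lambda _ fun i => hV (i + 1)).aemeasurable
  aemeasurable_snd := (measurable_pi_lambda _ hV).aemeasurable
  map_eq := by
    rw [(hind.precomp (add_left_injective 1)).map_fun_eq_infinitePi_map (fun i => hV (i + 1)),
      hind.map_fun_eq_infinitePi_map hV]
    congr 1
    funext i
    exact (hident (i + 1)).map_eq.trans (hident i).map_eq.symm

section Maximal

variable {Ω : Type*} [MeasurableSpace Ω] {P : Measure Ω} [IsProbabilityMeasure P]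
  {V : ℕ → Ω → ℝ}

/-- Garsia's argument: the maximum `M` of the partial sums of `V i - c` and the maximum `M'` for
the shifted sequence have the same law, and `M ≤ max 0 (V 0 - c + M')`. Hence `M - M'` is at most
`V 0 - c` on `{M > 0}` and at most `0` off it, and integrating gives `0 ≤ ∫_{M > 0} (V 0 - c)`. -/
lemma mul_measureReal_partialSumMax_pos_le (hV : ∀ i, Measurable (V i)) (hind : iIndepFun V P)
    (hident : ∀ i, IdentDistrib (V i) (V 0) P P) (hnonneg : ∀ i ω, 0 ≤ V i ω)
    (hint : Integrable (V 0) P) (c : ℝ) (n : ℕ) :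
    c * P.real {ω | 0 < partialSumMax (fun i => V i ω - c) n} ≤ ∫ ω, V 0 ω ∂P := by
  set Φ : (ℕ → ℝ) → ℝ := fun v => partialSumMax (fun i => v i - c) n
  set M : Ω → ℝ := fun ω => partialSumMax (fun i => V i ω - c) n
  set M' : Ω → ℝ := fun ω => partialSumMax (fun i => V (i + 1) ω - c) n
  set E := {ω | 0 < M ω}
  have hΦ : Measurable Φ := (measurable_partialSumMax n).comp (by fun_prop)
  have hE : MeasurableSet E :=
    measurableSet_lt measurable_const (hΦ.comp (measurable_pi_lambda _ hV))
  have hintc : ∀ i, Integrable (fun ω => V i ω - c) P :=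
    fun i => ((hident i).integrable_iff.2 hint).sub (integrable_const c)
  have hM : Integrable M P := integrable_partialSumMax hintc n
  have hM' : Integrable M' P := integrable_partialSumMax (fun i => hintc (i + 1)) n
  have hlaw : IdentDistrib M' M P P := (identDistrib_shift hV hind hident).comp hΦ
  have hkey : ∀ ω, M ω - M' ω ≤ E.indicator (fun ω => V 0 ω - c) ω := by
    intro ω
    have hM'0 : 0 ≤ M' ω := partialSumMax_nonneg _ n
    by_cases hω : ω ∈ E
    · rw [Set.indicator_of_mem hω]
      have hpos : 0 < M ω := hω
      rcases le_max_iff.1 <|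
        partialSumMax_le_max_zero_add_partialSumMax_succ (fun i => V i ω - c) n with h | h <;>
        linarith
    · rw [Set.indicator_of_notMem hω]
      have hM0 : M ω ≤ 0 := not_lt.1 hω
      linarith
  have hE_nonneg : 0 ≤ ∫ ω in E, (V 0 ω - c) ∂P :=
    calc 0 = ∫ ω, (M ω - M' ω) ∂P := by rw [integral_sub hM hM', hlaw.integral_eq, sub_self]
      _ ≤ ∫ ω, E.indicator (fun ω => V 0 ω - c) ω ∂P :=
          integral_mono (hM.sub hM') ((hintc 0).indicator hE) hkey
      _ = ∫ ω in E, (V 0 ω - c) ∂P := integral_indicator hE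
  have hE_split : ∫ ω in E, (V 0 ω - c) ∂P = ∫ ω in E, V 0 ω ∂P - c * P.real E := by
    rw [integral_sub hint.integrableOn (integrable_const c), setIntegral_const, smul_eq_mul,
      mul_comm]
  have hE_le : ∫ ω in E, V 0 ω ∂P ≤ ∫ ω, V 0 ω ∂P :=
    setIntegral_le_integral hint (ae_of_all _ (hnonneg 0))
  linarith

theorem measure_exists_mul_lt_sum_le (hV : ∀ i, Measurable (V i)) (hind : iIndepFun V P)
    (hident : ∀ i, IdentDistrib (V i) (V 0) P P) (hnonneg : ∀ i ω, 0 ≤ V i ω)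
    (hint : Integrable (V 0) P) {c : ℝ} (hc : 0 < c) :
    P {ω | ∃ k : ℕ, c * k < ∑ i ∈ range k, V i ω} ≤ ENNReal.ofReal ((∫ ω, V 0 ω ∂P) / c) := by
  set E : ℕ → Set Ω := fun n => {ω | 0 < partialSumMax (fun i => V i ω - c) n}
  have hcover : {ω | ∃ k : ℕ, c * k < ∑ i ∈ range k, V i ω} ⊆ ⋃ n, E n := by
    rintro ω ⟨k, hk⟩
    refine Set.mem_iUnion.2 ⟨k, lt_of_lt_of_le ?_ (sum_range_le_partialSumMax _ le_rfl)⟩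
    simp only [sum_sub_distrib, sum_const, card_range, nsmul_eq_mul]
    linarith
  have hmono : Monotone E := fun m n hmn ω (hω : 0 < _) =>
    hω.trans_le (partialSumMax_mono _ hmn)
  calc P {ω | ∃ k : ℕ, c * k < ∑ i ∈ range k, V i ω} ≤ P (⋃ n, E n) := measure_mono hcover
    _ = ⨆ n, P (E n) := hmono.measure_iUnion
    _ ≤ _ := iSup_le fun n => by
      rw [← ofReal_measureReal]
      exact ENNReal.ofReal_le_ofReal ((le_div_iff₀' hc).2
        (mul_measureReal_partialSumMax_pos_le hV hind hident hnonneg hint c n))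

end Maximal

theorem measure_exists_le_abs_sum_le {Ω : Type*} [MeasurableSpace Ω] {P : Measure Ω}
    [IsProbabilityMeasure P] {Y : ℕ → Ω → ℝ} {Z : Ω → ℝ} (hY : ∀ i, Measurable (Y i))
    (hind : iIndepFun Y P) (hident : ∀ i, IdentDistrib (Y i) Z P P) {q L ε : ℝ}
    (hq0 : 0 < q) (hq1 : q ≤ 1) (hL : 0 ≤ L) (hε : 0 < ε)
    (hint : Integrable (fun ω => rpowTail q L (Z ω)) P) {K : ℕ}
    (hK : ∀ k ≥ K, k * L ^ q⁻¹ < ε / 2 * (k : ℝ) ^ q⁻¹) :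
    P {ω | ∃ k ≥ max K 1, ε ≤ |((k : ℝ) ^ q⁻¹)⁻¹ * ∑ i ∈ range k, Y i ω|}
      ≤ ENNReal.ofReal ((∫ ω, rpowTail q L (Z ω) ∂P) / (ε / 2) ^ q) := by
  set V : ℕ → Ω → ℝ := fun i ω => rpowTail q L (Y i ω)
  have hlaw : ∀ i, IdentDistrib (V i) (fun ω => rpowTail q L (Z ω)) P P :=
    fun i => (hident i).comp (measurable_rpowTail q L)
  have hcover : {ω | ∃ k ≥ max K 1, ε ≤ |((k : ℝ) ^ q⁻¹)⁻¹ * ∑ i ∈ range k, Y i ω|}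
      ⊆ {ω | ∃ k : ℕ, (ε / 2) ^ q * k < ∑ i ∈ range k, V i ω} := by
    rintro ω ⟨k, hk, hS⟩
    exact ⟨k, mul_lt_sum_rpowTail_of_le_abs_sum hq0 hq1 hL (by omega) _
      (hK k (le_of_max_le_left hk)) hS⟩
  rw [← (hlaw 0).integral_eq]
  exact (measure_mono hcover).trans <| measure_exists_mul_lt_sum_le
    (fun i => (measurable_rpowTail q L).comp (hY i))
    (hind.comp _ fun _ => measurable_rpowTail q L)
    (fun i => (hlaw i).trans (hlaw 0).symm) (fun i ω => rpowTail_nonneg q L (Y i ω))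
    ((hlaw 0).integrable_iff.2 hint) (by positivity)

/-- Ps-uniform Marcinkiewicz–Zygmund strong law (sufficiency, `0 < q < 1`): if the uncentered
q-th moment of i.i.d. variables is Ps-uniformly integrable, then `k^{-1/q} Σ_{i=1}^k X_i`
vanishes Ps-uniformly almost surely. -/
theorem stmt14 {Ω : Type*} [MeasurableSpace Ω] (Ps : Set (Measure Ω))
    (hPs : ∀ P ∈ Ps, IsProbabilityMeasure P)
    (X : ℕ → Ω → ℝ) (hmeas : ∀ n, Measurable (X n))
    (hindep : ∀ P ∈ Ps, iIndepFun X P)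
    (hiid : ∀ P ∈ Ps, ∀ n, IdentDistrib (X n) (X 0) P P)
    (q : ℝ) (hq0 : 0 < q) (hq1 : q < 1)
    (hmom : ∀ P ∈ Ps, Integrable (fun ω => |X 0 ω| ^ q) P)
    (hUI : ∀ ε : ℝ, 0 < ε → ∃ M : ℕ, ∀ m ≥ M, ∀ P ∈ Ps,
      ∫ ω in {ω | (m : ℝ) < |X 0 ω| ^ q}, |X 0 ω| ^ q ∂P < ε) :
    ∀ ε : ℝ, 0 < ε → ∀ δ : ℝ, 0 < δ → ∃ M : ℕ, ∀ m ≥ M, ∀ P ∈ Ps,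
      P {ω | ∃ k ≥ m, ε ≤
        |((k : ℝ) ^ (1 / q))⁻¹ * ∑ i ∈ Finset.Icc 1 k, X i ω|} < ENNReal.ofReal δ := by
  intro ε hε δ hδ
  obtain ⟨L, hL⟩ := hUI ((ε / 2) ^ q * δ) (by positivity)
  obtain ⟨K, hK⟩ := eventually_atTop.1 <|
    eventually_mul_lt_mul_rpow (one_lt_inv₀ hq0 |>.2 hq1) ((L : ℝ) ^ q⁻¹) (half_pos hε)
  refine ⟨max K 1, fun m hm P hP => ?_⟩
  have := hPs P hP
  have hshift : ∀ k ω, ∑ i ∈ Icc 1 k, X i ω = ∑ i ∈ range k, X (i + 1) ω := by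
    intro k ω
    rw [← Ico_add_one_right_eq_Icc, sum_Ico_eq_sum_range]
    simp [add_comm]
  have htail_int : Integrable (fun ω => rpowTail q L (X 0 ω)) P :=
    (hmom P hP).mono ((measurable_rpowTail q L).comp (hmeas 0)).aestronglyMeasurable
      (ae_of_all _ fun ω => by
        rw [Real.norm_of_nonneg (rpowTail_nonneg ..), Real.norm_of_nonneg (by positivity)]
        exact rpowTail_le ..)
  have htail : ∫ ω, rpowTail q L (X 0 ω) ∂P =
      ∫ ω in {ω | (L : ℝ) < |X 0 ω| ^ q}, |X 0 ω| ^ q ∂P :=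
    integral_indicator (measurableSet_lt measurable_const (by fun_prop))
  calc P {ω | ∃ k ≥ m, ε ≤ |((k : ℝ) ^ (1 / q))⁻¹ * ∑ i ∈ Icc 1 k, X i ω|}
      ≤ P {ω | ∃ k ≥ max K 1, ε ≤ |((k : ℝ) ^ q⁻¹)⁻¹ * ∑ i ∈ range k, X (i + 1) ω|} :=
        measure_mono fun ω ⟨k, hk, hS⟩ => ⟨k, hm.trans hk, by rwa [← hshift, ← one_div q]⟩
    _ ≤ ENNReal.ofReal ((∫ ω, rpowTail q L (X 0 ω) ∂P) / (ε / 2) ^ q) :=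
        measure_exists_le_abs_sum_le (fun i => hmeas (i + 1))
          ((hindep P hP).precomp (add_left_injective 1)) (fun i => hiid P hP (i + 1))
          hq0 hq1.le L.cast_nonneg hε htail_int hK
    _ < ENNReal.ofReal δ := by
        rw [ENNReal.ofReal_lt_ofReal_iff hδ, div_lt_iff₀' (by positivity), htail]
        exact hL L le_rfl P hP
end
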